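/- arXiv:2107.00820 — 5 statements merged into one kernel-verified Lean document; each statement's English description precedes it below -/
import Mathlib

section
/- Let S, Ŝ, W be symmetric positive definite n×n real matrices satisfying c·Ŝ ≤ S ≤ C·Ŝ, d·W ≤ S ≤ D·W, and e·W ≤ Ŝ ≤ E·W (in the Loewner order) with positive constants c, C, d, D, e, E. For γ ≥ 0, define S_γ := (S⁻¹ + γW⁻¹)⁻¹ and Ŝ_γ := (Ŝ⁻¹ + γW⁻¹)⁻¹. Then every eigenvalue λ of the generalized eigenvalue problem S_γ x = λ Ŝ_γ x satisfies λ ≥ c/(1 + γ·c·E) + γ·d/(1 + γ·d). -/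
/-!
Put `y = Ŝ_γ x`. The eigenvalue equation becomes `(Ŝ⁻¹ + γ W⁻¹) y = λ (S⁻¹ + γ W⁻¹) y`, so
`λ = (q + γ r) / (p + γ r)` where `p, q, r` are the quadratic forms of `S⁻¹, Ŝ⁻¹, W⁻¹` at `y`.
Since inversion reverses the Loewner order, the hypotheses give `c p ≤ q`, `r ≤ E q` and `d p ≤ r`,
hence `c (p + γ r) ≤ (1 + γ c E) q` and `γ d (p + γ r) ≤ (1 + γ d) γ r`; adding the resulting
lower bounds for `q / (p + γ r)` and `γ r / (p + γ r)` gives the claim.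
-/

open Matrix

namespace Matrix

variable {ι : Type*} [Fintype ι]

lemma IsHermitian.dotProduct_mulVec_comm {R : Type*} [CommSemiring R] [StarRing R] [TrivialStar R]
    {A : Matrix ι ι R} (hA : A.IsHermitian) (u v : ι → R) :
    u ⬝ᵥ A *ᵥ v = v ⬝ᵥ A *ᵥ u := by
  rw [dotProduct_mulVec, ← mulVec_transpose, dotProduct_comm,
    ← conjTranspose_eq_transpose_of_trivial, hA.eq]

variable [DecidableEq ι]

lemma mulVec_nonsing_inv_mulVec {α : Type*} [CommRing α] {A : Matrix ι ι α} (hA : IsUnit A)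
    (x : ι → α) : A *ᵥ (A⁻¹ *ᵥ x) = x := by
  rw [mulVec_mulVec, mul_nonsing_inv _ ((isUnit_iff_isUnit_det A).mp hA), one_mulVec]

lemma nonsing_inv_smul {𝕜 : Type*} [Field 𝕜] {A : Matrix ι ι 𝕜} (hA : IsUnit A) {a : 𝕜}
    (ha : a ≠ 0) : (a • A)⁻¹ = a⁻¹ • A⁻¹ := by
  refine inv_eq_right_inv ?_
  rw [smul_mul_smul_comm, mul_inv_cancel₀ ha, mul_nonsing_inv _ ((isUnit_iff_isUnit_det A).mp hA),
    one_smul]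

theorem PosDef.dotProduct_inv_mulVec_le {A B : Matrix ι ι ℝ} (hA : A.PosDef) (hB : IsUnit B)
    (hAB : ∀ z, z ⬝ᵥ A *ᵥ z ≤ z ⬝ᵥ B *ᵥ z) (x : ι → ℝ) :
    x ⬝ᵥ B⁻¹ *ᵥ x ≤ x ⬝ᵥ A⁻¹ *ᵥ x := by
  set u := B⁻¹ *ᵥ x
  set v := A⁻¹ *ᵥ x
  have hAv : A *ᵥ v = x := mulVec_nonsing_inv_mulVec hA.isUnit x
  -- completing the square: `0 ≤ (u - v)ᵀ A (u - v) = uᵀAu - 2 uᵀx + xᵀA⁻¹x` and `uᵀAu ≤ uᵀBu = uᵀx`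
  have hsq : (u - v) ⬝ᵥ A *ᵥ (u - v) = u ⬝ᵥ A *ᵥ u - 2 * (x ⬝ᵥ u) + x ⬝ᵥ v := by
    rw [mulVec_sub, hAv, dotProduct_sub, sub_dotProduct, sub_dotProduct,
      hA.isHermitian.dotProduct_mulVec_comm v u, hAv, dotProduct_comm v x, dotProduct_comm u x]
    ring
  have hBu : u ⬝ᵥ B *ᵥ u = x ⬝ᵥ u := by
    rw [mulVec_nonsing_inv_mulVec hB, dotProduct_comm]
  have := hA.posSemidef.dotProduct_mulVec_nonneg (u - v)
  simp only [star_trivial] at this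
  linarith [hAB u]

theorem PosDef.smul_dotProduct_inv_mulVec_le {A B : Matrix ι ι ℝ} (hA : A.PosDef) (hB : IsUnit B)
    {a : ℝ} (ha : 0 < a) (hAB : ∀ z, a * (z ⬝ᵥ A *ᵥ z) ≤ z ⬝ᵥ B *ᵥ z) (x : ι → ℝ) :
    a * (x ⬝ᵥ B⁻¹ *ᵥ x) ≤ x ⬝ᵥ A⁻¹ *ᵥ x := by
  have := (hA.smul ha).dotProduct_inv_mulVec_le hB (by simpa [smul_mulVec] using hAB) x
  rwa [nonsing_inv_smul hA.isUnit ha.ne', smul_mulVec, dotProduct_smul, smul_eq_mul,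
    ← div_eq_inv_mul, le_div_iff₀' ha] at this

theorem PosDef.dotProduct_inv_mulVec_le_smul {A B : Matrix ι ι ℝ} (hA : A.PosDef) (hB : IsUnit B)
    {a : ℝ} (ha : 0 < a) (hAB : ∀ z, z ⬝ᵥ A *ᵥ z ≤ a * (z ⬝ᵥ B *ᵥ z)) (x : ι → ℝ) :
    x ⬝ᵥ B⁻¹ *ᵥ x ≤ a * (x ⬝ᵥ A⁻¹ *ᵥ x) := by
  have := hA.dotProduct_inv_mulVec_le (B := a • B) (hB.smul (Units.mk0 a ha.ne'))
    (by simpa [smul_mulVec] using hAB) x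
  rwa [nonsing_inv_smul hB ha.ne', smul_mulVec, dotProduct_smul, smul_eq_mul,
    ← div_eq_inv_mul, div_le_iff₀' ha] at this

lemma mulVec_eq_smul_of_nonsing_inv_mulVec_eq_smul {α : Type*} [CommRing α] {A B : Matrix ι ι α}
    (hA : IsUnit A) {lam : α} {x y : ι → α} (hy : B *ᵥ y = x) (h : A⁻¹ *ᵥ x = lam • y) :
    B *ᵥ y = lam • A *ᵥ y := by
  rw [hy, ← mulVec_smul, ← h, mulVec_nonsing_inv_mulVec hA]

end Matrix

theorem le_of_rayleigh_bounds {c d E γ p q r lam : ℝ} (hc : 0 < c) (hd : 0 < d) (hE : 0 ≤ E)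
    (hγ : 0 ≤ γ) (hp : 0 < p) (hpq : c * p ≤ q) (hrq : r ≤ E * q) (hpr : d * p ≤ r)
    (hlam : q + γ * r = lam * (p + γ * r)) :
    c / (1 + γ * c * E) + γ * d / (1 + γ * d) ≤ lam := by
  have hq : 0 < q := by nlinarith
  have hr : 0 < r := by nlinarith
  have hpγr : 0 < p + γ * r := by positivity
  have hfirst : c / (1 + γ * c * E) * (p + γ * r) ≤ q := by
    rw [div_mul_eq_mul_div, div_le_iff₀ (by positivity)]
    nlinarith [mul_le_mul_of_nonneg_left hrq (mul_nonneg hγ hc.le)]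
  have hsecond : γ * d / (1 + γ * d) * (p + γ * r) ≤ γ * r := by
    rw [div_mul_eq_mul_div, div_le_iff₀ (by positivity)]
    nlinarith [mul_le_mul_of_nonneg_left hpr hγ]
  refine le_of_mul_le_mul_right ?_ hpγr
  rw [add_mul, ← hlam]
  exact add_le_add hfirst hsecond

theorem stmt_0_general {n : ℕ} (S Shat W : Matrix (Fin n) (Fin n) ℝ)
    (hS : S.PosDef) (hShat : Shat.PosDef) (hW : W.PosDef)
    (c d E : ℝ) (hc : 0 < c) (hd : 0 < d) (hE : 0 < E)
    (h1 : ∀ x : Fin n → ℝ, c * (x ⬝ᵥ Shat.mulVec x) ≤ x ⬝ᵥ S.mulVec x)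
    (h3 : ∀ x : Fin n → ℝ, d * (x ⬝ᵥ W.mulVec x) ≤ x ⬝ᵥ S.mulVec x)
    (h6 : ∀ x : Fin n → ℝ, x ⬝ᵥ Shat.mulVec x ≤ E * (x ⬝ᵥ W.mulVec x))
    (γ : ℝ) (hγ : 0 ≤ γ)
    (Sγ Shatγ : Matrix (Fin n) (Fin n) ℝ)
    (hSγ : Sγ = (S⁻¹ + γ • W⁻¹)⁻¹) (hShatγ : Shatγ = (Shat⁻¹ + γ • W⁻¹)⁻¹)
    (lam : ℝ) (x : Fin n → ℝ) (hx : x ≠ 0)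
    (heig : Sγ.mulVec x = lam • Shatγ.mulVec x) :
    c / (1 + γ * c * E) + γ * d / (1 + γ * d) ≤ lam := by
  subst hSγ hShatγ
  have hγW : (γ • W⁻¹).PosSemidef := hW.inv.posSemidef.smul hγ
  have hA := (hS.inv.add_posSemidef hγW).isUnit
  have hB := (hShat.inv.add_posSemidef hγW).isUnit
  have hBy := mulVec_nonsing_inv_mulVec hB x
  generalize (Shat⁻¹ + γ • W⁻¹)⁻¹ *ᵥ x = y at hBy heig
  have hy : y ≠ 0 := by
    rintro rfl
    exact hx (by rw [← hBy, mulVec_zero])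
  have hlam := congrArg (y ⬝ᵥ ·) (mulVec_eq_smul_of_nonsing_inv_mulVec_eq_smul hA hBy heig)
  simp only [add_mulVec, smul_mulVec, dotProduct_add, dotProduct_smul, smul_eq_mul] at hlam
  refine le_of_rayleigh_bounds hc hd hE.le hγ ?_ ?_ ?_ ?_ hlam
  · simpa using hS.inv.dotProduct_mulVec_pos hy
  · exact hShat.smul_dotProduct_inv_mulVec_le hS.isUnit hc h1 y
  · exact hShat.dotProduct_inv_mulVec_le_smul hW.isUnit hE h6 y
  · exact hW.smul_dotProduct_inv_mulVec_le hS.isUnit hd h3 y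

/-- Loewner order lower eigenvalue bound for the augmented Schur complement
approximation (Lemma 3.1, lower bound, first term). -/
theorem stmt_0 {n : ℕ} (S Shat W : Matrix (Fin n) (Fin n) ℝ)
    (hS : S.PosDef) (hShat : Shat.PosDef) (hW : W.PosDef)
    (c C d D e E : ℝ) (hc : 0 < c) (hC : 0 < C) (hd : 0 < d) (hD : 0 < D)
    (he : 0 < e) (hE : 0 < E)
    (h1 : ∀ x : Fin n → ℝ, c * (x ⬝ᵥ Shat.mulVec x) ≤ x ⬝ᵥ S.mulVec x)
    (h2 : ∀ x : Fin n → ℝ, x ⬝ᵥ S.mulVec x ≤ C * (x ⬝ᵥ Shat.mulVec x))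
    (h3 : ∀ x : Fin n → ℝ, d * (x ⬝ᵥ W.mulVec x) ≤ x ⬝ᵥ S.mulVec x)
    (h4 : ∀ x : Fin n → ℝ, x ⬝ᵥ S.mulVec x ≤ D * (x ⬝ᵥ W.mulVec x))
    (h5 : ∀ x : Fin n → ℝ, e * (x ⬝ᵥ W.mulVec x) ≤ x ⬝ᵥ Shat.mulVec x)
    (h6 : ∀ x : Fin n → ℝ, x ⬝ᵥ Shat.mulVec x ≤ E * (x ⬝ᵥ W.mulVec x))
    (γ : ℝ) (hγ : 0 ≤ γ)
    (Sγ Shatγ : Matrix (Fin n) (Fin n) ℝ)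
    (hSγ : Sγ = (S⁻¹ + γ • W⁻¹)⁻¹) (hShatγ : Shatγ = (Shat⁻¹ + γ • W⁻¹)⁻¹)
    (lam : ℝ) (x : Fin n → ℝ) (hx : x ≠ 0)
    (heig : Sγ.mulVec x = lam • Shatγ.mulVec x) :
    c / (1 + γ * c * E) + γ * d / (1 + γ * d) ≤ lam :=
  stmt_0_general S Shat W hS hShat hW c d E hc hd hE h1 h3 h6 γ hγ Sγ Shatγ hSγ hShatγ lam x hx heig
end

section
/- Let A be a symmetric positive definite n×n real matrix, B an m×n real matrix of full row rank, W a symmetric positive definite m×m real matrix, and γ > 0. Define A_γ := A + γ Bᵀ W⁻¹ B, S := B A⁻¹ Bᵀ, and S_γ := B A_γ⁻¹ Bᵀ. Then S_γ⁻¹ = S⁻¹ + γ W⁻¹. -/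
/-!
With `S = B A⁻¹ C` and `M = W + γ S`, one has `(A + γ C W⁻¹ B) A⁻¹ C = C W⁻¹ M`, hence
`B (A + γ C W⁻¹ B)⁻¹ C = S M⁻¹ W`, whose inverse is `W⁻¹ M S⁻¹ = S⁻¹ + γ W⁻¹`. For `C = Bᵀ`,
positive definiteness of `A` and `W` together with full row rank of `B` makes every matrix
inverted here positive definite.
-/

open Matrix

namespace Matrix

variable {m n R : Type*} [Fintype m] [Fintype n] [DecidableEq m] [DecidableEq n] [CommRing R]

theorem mul_inv_add_smul_mul_eq {A : Matrix n n R} {B : Matrix m n R} {C : Matrix n m R}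
    {W : Matrix m m R} {γ : R} (hA : IsUnit A) (hW : IsUnit W)
    (hAγ : IsUnit (A + γ • (C * W⁻¹ * B))) (hM : IsUnit (W + γ • (B * A⁻¹ * C))) :
    B * (A + γ • (C * W⁻¹ * B))⁻¹ * C =
      B * A⁻¹ * C * (W + γ • (B * A⁻¹ * C))⁻¹ * W := by
  let := hA.invertible; let := hW.invertible; let := hAγ.invertible; let := hM.invertible
  set Aγ := A + γ • (C * W⁻¹ * B)
  set M := W + γ • (B * A⁻¹ * C)
  have hAγ_mul : Aγ * (A⁻¹ * C) = C * W⁻¹ * M :=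
    calc Aγ * (A⁻¹ * C) = A * (A⁻¹ * C) + γ • (C * W⁻¹ * B * (A⁻¹ * C)) := by
          rw [Matrix.add_mul, smul_mul]
      _ = C + γ • (C * W⁻¹ * (B * A⁻¹ * C)) := by
          rw [mul_inv_cancel_left_of_invertible]; simp only [Matrix.mul_assoc]
      _ = C * W⁻¹ * M := by
          rw [Matrix.mul_add, Matrix.mul_smul, inv_mul_cancel_right_of_invertible]
  have hAγ_inv_mul : Aγ⁻¹ * C = A⁻¹ * C * M⁻¹ * W := by
    rw [← inv_mul_cancel_left_of_invertible Aγ (A⁻¹ * C), hAγ_mul]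
    simp only [Matrix.mul_assoc, mul_inv_cancel_left_of_invertible, inv_mul_of_invertible,
      Matrix.mul_one]
  rw [Matrix.mul_assoc B, hAγ_inv_mul]
  simp only [Matrix.mul_assoc]

theorem inv_mul_inv_add_smul_mul_eq {A : Matrix n n R} {B : Matrix m n R} {C : Matrix n m R}
    {W : Matrix m m R} {γ : R} (hA : IsUnit A) (hW : IsUnit W)
    (hAγ : IsUnit (A + γ • (C * W⁻¹ * B))) (hS : IsUnit (B * A⁻¹ * C))
    (hM : IsUnit (W + γ • (B * A⁻¹ * C))) :
    (B * (A + γ • (C * W⁻¹ * B))⁻¹ * C)⁻¹ = (B * A⁻¹ * C)⁻¹ + γ • W⁻¹ := by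
  let := hW.invertible; let := hS.invertible; let := hM.invertible
  rw [mul_inv_add_smul_mul_eq hA hW hAγ hM, mul_inv_rev, mul_inv_rev, inv_inv_of_invertible,
    Matrix.add_mul, Matrix.mul_add, inv_mul_cancel_left_of_invertible, Matrix.smul_mul,
    mul_inv_of_invertible, Matrix.mul_smul, Matrix.mul_one]

omit [DecidableEq m] [DecidableEq n] in
theorem vecMul_injective_of_rank_eq_card {K : Type*} [Field K] {B : Matrix m n K}
    (hB : B.rank = Fintype.card m) : Function.Injective B.vecMul := by
  rw [vecMul_injective_iff, linearIndependent_iff_card_eq_finrank_span, ← hB,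
    rank_eq_finrank_span_row, Set.finrank]

end Matrix

/-- Sherman–Morrison–Woodbury identity for the augmented Schur complement:
`Sγ⁻¹ = S⁻¹ + γ W⁻¹` (equation (3.3)). -/
theorem stmt_4 {n m : ℕ} (A : Matrix (Fin n) (Fin n) ℝ)
    (B : Matrix (Fin m) (Fin n) ℝ) (W : Matrix (Fin m) (Fin m) ℝ)
    (hA : A.PosDef) (hW : W.PosDef) (hB : B.rank = m)
    (γ : ℝ) (hγ : 0 < γ)
    (Aγ : Matrix (Fin n) (Fin n) ℝ) (hAγ : Aγ = A + γ • (Bᵀ * W⁻¹ * B))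
    (S Sγ : Matrix (Fin m) (Fin m) ℝ)
    (hS : S = B * A⁻¹ * Bᵀ) (hSγ : Sγ = B * Aγ⁻¹ * Bᵀ) :
    Sγ⁻¹ = S⁻¹ + γ • W⁻¹ := by
  have hSpd : (B * A⁻¹ * Bᵀ).PosDef := by
    simpa using hA.inv.mul_mul_conjTranspose_same
      (vecMul_injective_of_rank_eq_card (by simpa using hB))
  have hAγpd : (A + γ • (Bᵀ * W⁻¹ * B)).PosDef := by
    refine hA.add_posSemidef (PosSemidef.smul ?_ hγ.le)
    simpa using hW.inv.posSemidef.conjTranspose_mul_mul_same B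
  have hMpd : (W + γ • (B * A⁻¹ * Bᵀ)).PosDef := hW.add_posSemidef (hSpd.posSemidef.smul hγ.le)
  rw [hSγ, hS, hAγ]
  exact inv_mul_inv_add_smul_mul_eq hA.isUnit hW.isUnit hAγpd.isUnit hSpd.isUnit hMpd.isUnit
end

section
/- Let S and Ŝ be symmetric positive definite matrices with Ŝ = W, and let γ ≥ 0. If ν is an eigenvalue of the generalized eigenvalue problem S y = ν Ŝ y, then λ = (1+γ)/(ν⁻¹+γ) is an eigenvalue of the generalized eigenvalue problem S_γ x = λ Ŝ_γ x, where S_γ := (S⁻¹ + γŜ⁻¹)⁻¹ and Ŝ_γ := ((1+γ)Ŝ⁻¹)⁻¹, and conversely every eigenvalue of the latter problem arises this way. -/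
open Matrix

/-!
Both pencils reduce to ordinary eigenproblems of `M = S⁻¹ Ŝ`: for invertible `P`,
`P x = λ Q x` with `x ≠ 0` means `P⁻¹ Q x = λ⁻¹ x`. For the pair `(S, Ŝ)` this is
`M y = ν⁻¹ y`; for the regularized pair `(Sγ, Ŝγ)` one has
`Sγ⁻¹ Ŝγ = (1 + γ)⁻¹ (M + γ)`, so it is `(M + γ) x = (1 + γ) λ⁻¹ x`. The two problems
therefore share their eigenvectors, and `ν⁻¹ + γ = (1 + γ) λ⁻¹`.
-/

namespace Matrix

variable {ι K : Type*} [Fintype ι] [DecidableEq ι] [Field K]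

lemma ne_zero_of_mulVec_eq_smul {P : Matrix ι ι K} (hP : IsUnit P.det) {x v : ι → K}
    {c : K} (hx : x ≠ 0) (h : P *ᵥ x = c • v) : c ≠ 0 := by
  rintro rfl
  exact hx (eq_zero_of_mulVec_eq_zero hP.ne_zero (by rw [h, zero_smul]))

lemma mulVec_eq_smul_mulVec_iff {P Q : Matrix ι ι K} (hP : IsUnit P.det) {c : K} (hc : c ≠ 0)
    (x : ι → K) : P *ᵥ x = c • Q *ᵥ x ↔ (P⁻¹ * Q) *ᵥ x = c⁻¹ • x := by
  have hQx : c • Q *ᵥ x = P *ᵥ (c • (P⁻¹ * Q) *ᵥ x) := by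
    rw [mulVec_smul, mulVec_mulVec, mul_nonsing_inv_cancel_left _ _ hP]
  rw [hQx, (mulVec_injective_of_isUnit ((isUnit_iff_isUnit_det P).2 hP)).eq_iff,
    eq_inv_smul_iff₀ hc, eq_comm]

lemma inv_smul_inv_of_isUnit_det {T : Matrix ι ι K} (hT : IsUnit T.det) {c : K} (hc : c ≠ 0) :
    (c • T⁻¹)⁻¹ = c⁻¹ • T :=
  inv_eq_right_inv <| by rw [smul_mul_smul_comm, mul_inv_cancel₀ hc, nonsing_inv_mul T hT, one_smul]

lemma inv_inv_add_smul_inv_mul_inv_smul_inv {S T : Matrix ι ι K} {γ : K}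
    (hA : IsUnit (S⁻¹ + γ • T⁻¹).det) (hT : IsUnit T.det) (hγ : 1 + γ ≠ 0) :
    (S⁻¹ + γ • T⁻¹)⁻¹⁻¹ * ((1 + γ) • T⁻¹)⁻¹ = (1 + γ)⁻¹ • (S⁻¹ * T + γ • 1) := by
  rw [nonsing_inv_nonsing_inv _ hA, inv_smul_inv_of_isUnit_det hT hγ, mul_smul_comm, add_mul,
    smul_mul_assoc, nonsing_inv_mul T hT]

lemma inv_smul_add_smul_one_mulVec_eq_smul_iff {M : Matrix ι ι K} {a : K} (ha : a ≠ 0) (γ c : K)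
    (x : ι → K) : (a⁻¹ • (M + γ • 1)) *ᵥ x = c • x ↔ M *ᵥ x = (a * c - γ) • x := by
  rw [smul_mulVec, add_mulVec, smul_mulVec, one_mulVec, inv_smul_eq_iff₀ ha, smul_smul,
    ← eq_sub_iff_add_eq, sub_smul]

end Matrix

namespace Matrix.PosDef

variable {ι : Type*} [Fintype ι]

lemma inv_add_smul_inv [DecidableEq ι] {S T : Matrix ι ι ℝ} (hS : S.PosDef) (hT : T.PosDef) {γ : ℝ}
    (hγ : 0 ≤ γ) : (S⁻¹ + γ • T⁻¹).PosDef :=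
  hS.inv.add_posSemidef (hT.inv.posSemidef.smul hγ)

lemma pos_of_mulVec_eq_smul_mulVec {S T : Matrix ι ι ℝ} (hS : S.PosDef) (hT : T.PosDef)
    {y : ι → ℝ} {ν : ℝ} (hy : y ≠ 0) (h : S *ᵥ y = ν • T *ᵥ y) : 0 < ν := by
  have hSy := hS.dotProduct_mulVec_pos hy
  have hTy := hT.dotProduct_mulVec_pos hy
  rw [h, dotProduct_smul, smul_eq_mul] at hSy
  exact pos_of_mul_pos_left hSy hTy.le

end Matrix.PosDef

/-- Remark 3.2: when `Ŝ = W`, the generalized eigenvalues of `Sγ x = λ Ŝγ x`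
are exactly `λ = (1+γ)/(ν⁻¹+γ)` for `ν` a generalized eigenvalue of `S y = ν Ŝ y`. -/
theorem stmt_6 {n : ℕ} (S Shat : Matrix (Fin n) (Fin n) ℝ)
    (hS : S.PosDef) (hShat : Shat.PosDef)
    (γ : ℝ) (hγ : 0 ≤ γ)
    (Sγ Shatγ : Matrix (Fin n) (Fin n) ℝ)
    (hSγ : Sγ = (S⁻¹ + γ • Shat⁻¹)⁻¹)
    (hShatγ : Shatγ = ((1 + γ) • Shat⁻¹)⁻¹) :
    (∀ ν : ℝ, (∃ y : Fin n → ℝ, y ≠ 0 ∧ S.mulVec y = ν • Shat.mulVec y) →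
      ∃ x : Fin n → ℝ, x ≠ 0 ∧
        Sγ.mulVec x = ((1 + γ) / (ν⁻¹ + γ)) • Shatγ.mulVec x) ∧
    (∀ lam : ℝ, (∃ x : Fin n → ℝ, x ≠ 0 ∧ Sγ.mulVec x = lam • Shatγ.mulVec x) →
      ∃ ν : ℝ, (∃ y : Fin n → ℝ, y ≠ 0 ∧ S.mulVec y = ν • Shat.mulVec y) ∧
        lam = (1 + γ) / (ν⁻¹ + γ)) := by
  have hS' : IsUnit S.det := (isUnit_iff_isUnit_det S).1 hS.isUnit
  have hShat' : IsUnit Shat.det := (isUnit_iff_isUnit_det Shat).1 hShat.isUnit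
  have hM : IsUnit (S⁻¹ * Shat).det := by
    rw [det_mul]; exact (isUnit_nonsing_inv_det _ hS').mul hShat'
  have hA : IsUnit (S⁻¹ + γ • Shat⁻¹).det :=
    (isUnit_iff_isUnit_det _).1 (hS.inv_add_smul_inv hShat hγ).isUnit
  have hSγ' : IsUnit Sγ.det := hSγ ▸ isUnit_nonsing_inv_det _ hA
  have hγ1 : 1 + γ ≠ 0 := by positivity
  have hpencil : Sγ⁻¹ * Shatγ = (1 + γ)⁻¹ • (S⁻¹ * Shat + γ • 1) := by
    rw [hSγ, hShatγ, inv_inv_add_smul_inv_mul_inv_smul_inv hA hShat' hγ1]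
  constructor
  · rintro ν ⟨y, hy, hSy⟩
    have hν := hS.pos_of_mulVec_eq_smul_mulVec hShat hy hSy
    have hMy := (mulVec_eq_smul_mulVec_iff hS' hν.ne' y).1 hSy
    refine ⟨y, hy, (mulVec_eq_smul_mulVec_iff hSγ' (by positivity) y).2 ?_⟩
    rw [hpencil, inv_smul_add_smul_one_mulVec_eq_smul_iff hγ1, hMy, inv_div]
    congr 1
    field_simp
    ring
  · rintro lam ⟨x, hx, hSγx⟩
    have hlam := ne_zero_of_mulVec_eq_smul hSγ' hx hSγx
    have hMx := (mulVec_eq_smul_mulVec_iff hSγ' hlam x).1 hSγx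
    rw [hpencil, inv_smul_add_smul_one_mulVec_eq_smul_iff hγ1] at hMx
    have hμ := ne_zero_of_mulVec_eq_smul hM hx hMx
    refine ⟨((1 + γ) * lam⁻¹ - γ)⁻¹, ⟨x, hx, ?_⟩, ?_⟩
    · rwa [mulVec_eq_smul_mulVec_iff hS' (inv_ne_zero hμ), inv_inv]
    · rw [inv_inv, sub_add_cancel, ← div_eq_mul_inv, div_div_cancel₀ hγ1]
end

section
/- Let A_γ be an invertible n×n matrix, B an m×n matrix with S_γ := B A_γ⁻¹ Bᵀ invertible, and Ŝ_γ an invertible m×m matrix. Define P := [[I, −A_γ⁻¹Bᵀ],[0, I]] · [[A_γ⁻¹, 0],[0, −Ŝ_γ⁻¹]] · [[I, 0],[−BA_γ⁻¹, I]]. Then P·[[A_γ, Bᵀ],[B, 0]] = [[I, A_γ⁻¹Bᵀ(I − Ŝ_γ⁻¹S_γ)],[0, Ŝ_γ⁻¹S_γ]]. -/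
open Matrix

/-- Remark 3.3: the block-preconditioned augmented saddle point matrix. -/
theorem stmt_8 {n m : ℕ} (Aγ : Matrix (Fin n) (Fin n) ℝ)
    (B : Matrix (Fin m) (Fin n) ℝ) (hAγ : IsUnit Aγ)
    (Sγ Shatγ : Matrix (Fin m) (Fin m) ℝ)
    (hSγ : Sγ = B * Aγ⁻¹ * Bᵀ) (hSγunit : IsUnit Sγ) (hShatγ : IsUnit Shatγ)
    (P : Matrix (Fin n ⊕ Fin m) (Fin n ⊕ Fin m) ℝ)
    (hP : P = fromBlocks 1 (-(Aγ⁻¹ * Bᵀ)) 0 1 *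
        fromBlocks Aγ⁻¹ 0 0 (-(Shatγ⁻¹)) *
        fromBlocks 1 0 (-(B * Aγ⁻¹)) 1) :
    P * fromBlocks Aγ Bᵀ B 0 =
      fromBlocks 1 (Aγ⁻¹ * Bᵀ * (1 - Shatγ⁻¹ * Sγ)) 0 (Shatγ⁻¹ * Sγ) := by
  subst hP hSγ
  have h1 : Aγ⁻¹ * Aγ = 1 := nonsing_inv_mul Aγ ((isUnit_iff_isUnit_det Aγ).mp hAγ)
  simp only [fromBlocks_multiply, Matrix.mul_one, Matrix.one_mul, Matrix.mul_zero,
    Matrix.zero_mul, add_zero, zero_add, Matrix.neg_mul, Matrix.mul_neg, neg_neg,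
    Matrix.mul_sub, Matrix.sub_mul, Matrix.add_mul, Matrix.smul_mul,
    Matrix.mul_assoc, h1]
  rw [add_assoc, neg_add_cancel, add_zero, add_neg_cancel, ← sub_eq_add_neg]
end

section
/- Let H be a finite-dimensional real inner product space, A: H → H a symmetric positive definite operator, and let H = Σ_i V_i be a decomposition into subspaces with inclusions I_i: V_i → H. Let A_i: V_i → V_i denote the restriction defined by ⟨A_i u_i, v_i⟩ = ⟨A I_i u_i, I_i v_i⟩, and define D⁻¹ := Σ_i I_i A_i⁻¹ I_i*. Then D⁻¹ is symmetric positive definite, and for all u ∈ H, ⟨D u, u⟩ = min{ Σ_i ⟨A u_i, u_i⟩ : u = Σ_i u_i, u_i ∈ V_i }. -/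
/-!
Write `Pᵢ = Iᵢ*` for the orthogonal projection onto `Vᵢ`. Since `Aᵢ` is the compression of `A`
to `Vᵢ`, the vector `wᵢ = Aᵢ⁻¹ Pᵢ f` is the Galerkin solution of `A w = f` in `Vᵢ`:
`⟪A wᵢ, y⟫ = ⟪f, y⟫` for every `y ∈ Vᵢ`. Symmetry and definiteness of `D⁻¹` are inherited from
the `Aᵢ⁻¹` through `⟪D⁻¹ u, v⟫ = ∑ᵢ ⟪Aᵢ⁻¹ Pᵢ u, Pᵢ v⟫`, the spanning condition excluding
`Pᵢ u = 0` for all `i` when `u ≠ 0`. For `f = D u` the Galerkin solutions split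
`u = D⁻¹ f = ∑ᵢ wᵢ`, and for any other splitting `u = ∑ᵢ vᵢ` the cross terms
`∑ᵢ ⟪A wᵢ, vᵢ - wᵢ⟫ = ⟪f, u - u⟫` vanish, so
`∑ᵢ ⟪A vᵢ, vᵢ⟫ = ∑ᵢ ⟪A wᵢ, wᵢ⟫ + ∑ᵢ ⟪A (vᵢ - wᵢ), vᵢ - wᵢ⟫ ≥ ∑ᵢ ⟪A wᵢ, wᵢ⟫ = ⟪f, u⟫`.
-/

open RealInnerProductSpace

namespace LinearMap

theorem IsSymmetric.of_comp_eq_id {𝕜 E : Type*} [RCLike 𝕜] [NormedAddCommGroup E]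
    [InnerProductSpace 𝕜 E] {T S : E →ₗ[𝕜] E} (hT : T.IsSymmetric) (h : T ∘ₗ S = id) :
    S.IsSymmetric := by
  intro x y
  have hTS : ∀ z, T (S z) = z := LinearMap.congr_fun h
  calc inner 𝕜 (S x) y = inner 𝕜 (S x) (T (S y)) := by rw [hTS]
    _ = inner 𝕜 (T (S x)) (S y) := (hT _ _).symm
    _ = inner 𝕜 x (S y) := by rw [hTS]

theorem inner_pos_of_comp_eq_id {E : Type*} [NormedAddCommGroup E] [InnerProductSpace ℝ E]
    {T S : E →ₗ[ℝ] E} (hT : ∀ x, x ≠ 0 → 0 < ⟪T x, x⟫) (h : T ∘ₗ S = id) :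
    ∀ x, x ≠ 0 → 0 < ⟪S x, x⟫ := by
  intro x hx
  have hTS : T (S x) = x := LinearMap.congr_fun h x
  have hSx : S x ≠ 0 := fun h0 => hx (by rw [← hTS, h0, map_zero])
  simpa [hTS, real_inner_comm] using hT (S x) hSx

theorem inner_map_self_nonneg_of_pos {E : Type*} [NormedAddCommGroup E] [InnerProductSpace ℝ E]
    {T : E →ₗ[ℝ] E} (hT : ∀ x, x ≠ 0 → 0 < ⟪T x, x⟫) (x : E) : 0 ≤ ⟪T x, x⟫ := by
  rcases eq_or_ne x 0 with rfl | hx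
  · simp
  · exact (hT x hx).le

end LinearMap

section SchwarzLemma

variable {H : Type*} [NormedAddCommGroup H] [InnerProductSpace ℝ H]

section Compression

variable {A : H →ₗ[ℝ] H} {K : Submodule ℝ H} {Ak : K →ₗ[ℝ] K}

theorem LinearMap.IsSymmetric.of_inner_compression_eq (hAk : ∀ x y : K, ⟪Ak x, y⟫ = ⟪A x, y⟫)
    (hA : A.IsSymmetric) : Ak.IsSymmetric := by
  intro x y
  rw [hAk, hA, real_inner_comm, ← hAk, real_inner_comm]

theorem inner_compression_pos (hAk : ∀ x y : K, ⟪Ak x, y⟫ = ⟪A x, y⟫)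
    (hA : ∀ u, u ≠ 0 → 0 < ⟪A u, u⟫) (x : K) (hx : x ≠ 0) : 0 < ⟪Ak x, x⟫ := by
  rw [hAk]
  exact hA x (by simpa using hx)

theorem inner_apply_rightInverse_orthogonalProjectionOnto [K.HasOrthogonalProjection]
    (hAk : ∀ x y : K, ⟪Ak x, y⟫ = ⟪A x, y⟫) {S : K →ₗ[ℝ] K} (hS : Ak ∘ₗ S = LinearMap.id)
    (f : H) (y : K) : ⟪A (S (K.orthogonalProjectionOnto f)), y⟫ = ⟪f, y⟫ := by
  have hAkS : Ak (S (K.orthogonalProjectionOnto f)) = K.orthogonalProjectionOnto f :=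
    LinearMap.congr_fun hS _
  rw [← hAk, hAkS, Submodule.inner_orthogonalProjectionOnto_eq_of_mem_right]

end Compression

section SubspaceCorrection

variable {ι : Type*} [Fintype ι] (V : ι → Submodule ℝ H) [∀ i, (V i).HasOrthogonalProjection]

/-- The parallel subspace correction `∑ᵢ Iᵢ Sᵢ Iᵢ*`; the adjoint `Iᵢ*` of the inclusion
`Iᵢ : Vᵢ → H` is the orthogonal projection onto `Vᵢ`. -/
noncomputable def subspaceCorrection (S : ∀ i, V i →ₗ[ℝ] V i) : H →ₗ[ℝ] H :=
  ∑ i, (V i).subtype ∘ₗ S i ∘ₗ (V i).orthogonalProjectionOnto.toLinearMap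

variable {V}

theorem inner_subspaceCorrection_apply (S : ∀ i, V i →ₗ[ℝ] V i) (u v : H) :
    ⟪subspaceCorrection V S u, v⟫ =
      ∑ i, ⟪S i ((V i).orthogonalProjectionOnto u), (V i).orthogonalProjectionOnto v⟫ := by
  simp [subspaceCorrection, sum_inner]

theorem isSymmetric_subspaceCorrection {S : ∀ i, V i →ₗ[ℝ] V i}
    (hS : ∀ i, (S i).IsSymmetric) : (subspaceCorrection V S).IsSymmetric := by
  intro u v
  rw [real_inner_comm _ u, inner_subspaceCorrection_apply, inner_subspaceCorrection_apply]
  exact Finset.sum_congr rfl fun i _ => by rw [hS, real_inner_comm]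

theorem eq_zero_of_forall_orthogonalProjectionOnto_eq_zero
    (hspan : ∀ u : H, ∃ w : ∀ i, V i, ∑ i, (w i : H) = u) {u : H}
    (hu : ∀ i, (V i).orthogonalProjectionOnto u = 0) : u = 0 := by
  obtain ⟨w, rfl⟩ := hspan u
  refine (inner_self_eq_zero (𝕜 := ℝ)).mp ?_
  rw [inner_sum]
  refine Finset.sum_eq_zero fun i _ => ?_
  rw [real_inner_comm, ← Submodule.inner_orthogonalProjectionOnto_eq_of_mem_left, hu,
    inner_zero_right]

theorem inner_subspaceCorrection_self_pos
    (hspan : ∀ u : H, ∃ w : ∀ i, V i, ∑ i, (w i : H) = u) {S : ∀ i, V i →ₗ[ℝ] V i}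
    (hS : ∀ i (x : V i), x ≠ 0 → 0 < ⟪S i x, x⟫) (u : H) (hu : u ≠ 0) :
    0 < ⟪subspaceCorrection V S u, u⟫ := by
  obtain ⟨i, hi⟩ : ∃ i, (V i).orthogonalProjectionOnto u ≠ 0 := by
    by_contra! h
    exact hu (eq_zero_of_forall_orthogonalProjectionOnto_eq_zero hspan h)
  rw [inner_subspaceCorrection_apply]
  exact Finset.sum_pos' (fun j _ => LinearMap.inner_map_self_nonneg_of_pos (hS j) _) ⟨i, Finset.mem_univ i, hS i _ hi⟩

end SubspaceCorrection

theorem LinearMap.IsSymmetric.inner_map_self_eq {A : H →ₗ[ℝ] H} (hA : A.IsSymmetric) (x y : H) :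
    ⟪A y, y⟫ = ⟪A x, x⟫ + 2 * ⟪A x, y - x⟫ + ⟪A (y - x), y - x⟫ := by
  have hxy : ⟪A (y - x), x⟫ = ⟪A x, y - x⟫ := by rw [hA, real_inner_comm]
  have hy : y = x + (y - x) := by abel
  conv_lhs => rw [hy]
  rw [map_add, inner_add_left, inner_add_right, inner_add_right, hxy]
  ring

theorem isLeast_sum_energy_of_galerkin {ι : Type*} [Fintype ι] {V : ι → Submodule ℝ H}
    {A : H →ₗ[ℝ] H} (hA : A.IsSymmetric) (hA0 : ∀ x, 0 ≤ ⟪A x, x⟫) {f : H} {w₀ : ∀ i, V i}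
    (hw₀ : ∀ i (y : V i), ⟪A (w₀ i), y⟫ = ⟪f, y⟫) :
    IsLeast {t : ℝ | ∃ w : ∀ i, V i, ∑ i, (w i : H) = ∑ i, (w₀ i : H) ∧
      t = ∑ i, ⟪A (w i), (w i : H)⟫} ⟪f, ∑ i, (w₀ i : H)⟫ := by
  have henergy : ⟪f, ∑ i, (w₀ i : H)⟫ = ∑ i, ⟪A (w₀ i), (w₀ i : H)⟫ := by
    rw [inner_sum]
    exact Finset.sum_congr rfl fun i _ => (hw₀ i (w₀ i)).symm
  refine ⟨⟨w₀, rfl, henergy⟩, ?_⟩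
  rintro t ⟨w, hw, rfl⟩
  have hcross : ∑ i, ⟪A (w₀ i), (w i : H) - w₀ i⟫ = 0 := by
    calc ∑ i, ⟪A (w₀ i), (w i : H) - w₀ i⟫ = ∑ i, ⟪f, (w i : H) - w₀ i⟫ :=
          Finset.sum_congr rfl fun i _ => by
            simpa only [Submodule.coe_sub] using hw₀ i (w i - w₀ i)
      _ = ⟪f, ∑ i, (w i : H) - ∑ i, (w₀ i : H)⟫ := by rw [← Finset.sum_sub_distrib, inner_sum]
      _ = 0 := by rw [hw, sub_self, inner_zero_right]
  have hrest : 0 ≤ ∑ i, ⟪A ((w i : H) - w₀ i), (w i : H) - w₀ i⟫ :=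
    Finset.sum_nonneg fun i _ => hA0 _
  rw [henergy, Finset.sum_congr rfl fun i _ => hA.inner_map_self_eq (w₀ i) (w i),
    Finset.sum_add_distrib, Finset.sum_add_distrib, ← Finset.mul_sum, hcross]
  linarith

end SchwarzLemma

/-- The additive Schwarz (parallel subspace correction) lemma: the operator `D`
built from exact subspace solves is SPD and `⟨D u, u⟩` is the minimal sum of
`A`-energies over all splittings of `u` along the subspaces `V i`. -/
theorem stmt_17 {H : Type*} [NormedAddCommGroup H] [InnerProductSpace ℝ H]
    [FiniteDimensional ℝ H]
    (A : H →ₗ[ℝ] H)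
    (hAsymm : ∀ u v : H, ⟪A u, v⟫ = ⟪u, A v⟫)
    (hApos : ∀ u : H, u ≠ 0 → 0 < ⟪A u, u⟫)
    {ι : Type*} [Fintype ι] (V : ι → Submodule ℝ H)
    (hspan : ∀ u : H, ∃ w : (i : ι) → V i, ∑ i, ((w i : H)) = u)
    (Ai : (i : ι) → (V i →ₗ[ℝ] V i))
    (hAi : ∀ (i : ι) (ui vi : V i), ⟪Ai i ui, vi⟫ = ⟪A (ui : H), (vi : H)⟫)
    (AiInv : (i : ι) → (V i →ₗ[ℝ] V i))
    (hAiInv : ∀ i, AiInv i ∘ₗ Ai i = LinearMap.id ∧ Ai i ∘ₗ AiInv i = LinearMap.id)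
    (Dinv : H →ₗ[ℝ] H)
    (hDinv : Dinv = ∑ i, (V i).subtype ∘ₗ AiInv i ∘ₗ
      ((Submodule.orthogonalProjectionOnto (V i)).toLinearMap))
    (D : H →ₗ[ℝ] H)
    (hD : D ∘ₗ Dinv = LinearMap.id ∧ Dinv ∘ₗ D = LinearMap.id) :
    (∀ u v : H, ⟪Dinv u, v⟫ = ⟪u, Dinv v⟫) ∧
    (∀ u : H, u ≠ 0 → 0 < ⟪Dinv u, u⟫) ∧
    (∀ u : H, IsLeast
      {t : ℝ | ∃ w : (i : ι) → V i, ∑ i, ((w i : H)) = u ∧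
        t = ∑ i, ⟪A ((w i : H)), ((w i : H))⟫} ⟪D u, u⟫) := by
  change Dinv = subspaceCorrection V AiInv at hDinv
  subst hDinv
  have hA : A.IsSymmetric := hAsymm
  refine ⟨isSymmetric_subspaceCorrection fun i =>
      ((hA.of_inner_compression_eq (hAi i)).of_comp_eq_id (hAiInv i).2),
    inner_subspaceCorrection_self_pos hspan fun i =>
      LinearMap.inner_pos_of_comp_eq_id (inner_compression_pos (hAi i) hApos) (hAiInv i).2,
    fun u => ?_⟩
  have hsplit : ∑ i, ((AiInv i ((V i).orthogonalProjectionOnto (D u)) : V i) : H) = u := by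
    simpa [subspaceCorrection] using LinearMap.congr_fun hD.2 u
  simpa only [hsplit, real_inner_comm u] using isLeast_sum_energy_of_galerkin hA
    (LinearMap.inner_map_self_nonneg_of_pos hApos)
    fun i => inner_apply_rightInverse_orthogonalProjectionOnto (hAi i) (hAiInv i).2 (D u)
end
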